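/- arXiv:2407.05462 — 2 statements merged into one kernel-verified Lean document; each statement's English description precedes it below -/
import Mathlib

section
/- Timmesfeld's group SL₂(L) is perfect: it equals its own commutator subgroup. In fact A ⊆ [SL₂(L), SL₂(L)], via the identity [diag(s)⁻¹, a(t)] = a(t(1 − s²)) for s in the subgroup of Kˣ generated by L \ {0} and t ∈ L. -/
open Matrix Pointwise

noncomputable section

variable {K : Type*} [Field K]

abbrev SL2 (K : Type*) [Field K] := Matrix.SpecialLinearGroup (Fin 2) K

/-- `a(t) = [[1,t],[0,1]]`. -/
def aMat (t : K) : SL2 K :=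
  ⟨!![1, t; 0, 1], by simp [Matrix.det_fin_two_of]⟩

/-- `b(t) = [[1,0],[t,1]]`. -/
def bMat (t : K) : SL2 K :=
  ⟨!![1, 0; t, 1], by simp [Matrix.det_fin_two_of]⟩

/-- `diag(s) = [[s,0],[0,s⁻¹]]`. -/
def diagMat (s : Kˣ) : SL2 K :=
  ⟨!![(s : K), 0; 0, ((s⁻¹ : Kˣ) : K)], by simp [Matrix.det_fin_two_of]⟩

/-- `w = [[0,1],[1,0]]`, in `SL₂` since `char K = 2`. -/
def wMat (K : Type*) [Field K] [CharP K 2] : SL2 K :=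
  ⟨!![0, 1; 1, 0], by simp [Matrix.det_fin_two_of, CharTwo.neg_eq]⟩

def setA (L : AddSubgroup K) : Set (SL2 K) := {g | ∃ t ∈ L, g = aMat t}

def setAop (L : AddSubgroup K) : Set (SL2 K) := {g | ∃ t ∈ L, g = bMat t}

/-- Timmesfeld's `SL₂(L)`. -/
def SL2L (L : AddSubgroup K) : Subgroup (SL2 K) := Subgroup.closure (setA L ∪ setAop L)

/-- The subgroup of `Kˣ` generated by the nonzero elements of `L`. -/
def Tgen (L : AddSubgroup K) : Subgroup Kˣ := Subgroup.closure {u : Kˣ | (u : K) ∈ L}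

def setTL (L : AddSubgroup K) : Set (SL2 K) := {g | ∃ s ∈ Tgen L, g = diagMat s}

def setTK (K : Type*) [Field K] : Set (SL2 K) := {g | ∃ s : Kˣ, g = diagMat s}

def setB (L : AddSubgroup K) : Set (SL2 K) := setTL L * setA L

/-!
Since `K` is imperfect there is a non-square `c`; put `s = c²`. Both `s` and `s⁻¹ = (c⁻¹)²` lie
in `L`, and in characteristic 2 `diag(s) = a(s) b(s⁻¹) a(s) w` with `w = a(1) b(1) a(1)`, so
`diag(s) ∈ SL₂(L)`. Commuting `diag(s)^{±1}` with root elements gives `a(u(1 - s²))` and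
`b(u(1 - s²))` for `u ∈ L`. As `1 - s² = (1 - c)⁴` is a nonzero fourth power, `u ↦ u(1 - s²)` maps
`L` onto itself, so every generator of `SL₂(L)` is a commutator.
-/

section Matrices

open scoped commutatorElement

lemma aMat_mul (u v : K) : aMat u * aMat v = aMat (u + v) := by
  apply Subtype.ext
  simp only [Matrix.SpecialLinearGroup.coe_mul]
  simp [aMat, add_comm]

lemma bMat_mul (u v : K) : bMat u * bMat v = bMat (u + v) := by
  apply Subtype.ext
  simp only [Matrix.SpecialLinearGroup.coe_mul]
  simp [bMat]

lemma aMat_inv (t : K) : (aMat t)⁻¹ = aMat (-t) := by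
  refine inv_eq_of_mul_eq_one_right ?_
  rw [aMat_mul, add_neg_cancel]
  apply Subtype.ext
  simp [aMat, Matrix.one_fin_two]

lemma bMat_inv (t : K) : (bMat t)⁻¹ = bMat (-t) := by
  refine inv_eq_of_mul_eq_one_right ?_
  rw [bMat_mul, add_neg_cancel]
  apply Subtype.ext
  simp [bMat, Matrix.one_fin_two]

lemma diagMat_inv (s : Kˣ) : (diagMat s)⁻¹ = diagMat s⁻¹ := by
  refine inv_eq_of_mul_eq_one_right (Subtype.ext ?_)
  simp only [Matrix.SpecialLinearGroup.coe_mul]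
  simp [diagMat, Matrix.one_fin_two]

lemma diagMat_mul_aMat_mul_inv (s : Kˣ) (u : K) :
    diagMat s * aMat u * (diagMat s)⁻¹ = aMat ((s : K) ^ 2 * u) := by
  rw [diagMat_inv]
  apply Subtype.ext
  simp only [Matrix.SpecialLinearGroup.coe_mul]
  simp [diagMat, aMat]
  ring

lemma diagMat_inv_mul_bMat_mul (s : Kˣ) (u : K) :
    (diagMat s)⁻¹ * bMat u * diagMat s = bMat ((s : K) ^ 2 * u) := by
  rw [diagMat_inv]
  apply Subtype.ext
  simp only [Matrix.SpecialLinearGroup.coe_mul]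
  simp [diagMat, bMat]
  ring

lemma commutatorElement_diagMat_aMat_inv (s : Kˣ) (t : K) :
    (⁅diagMat s, (aMat t)⁻¹⁆ : SL2 K) = aMat (t * (1 - (s : K) ^ 2)) := by
  rw [commutatorElement_def, inv_inv, aMat_inv, mul_assoc (diagMat s), ← mul_assoc,
    diagMat_mul_aMat_mul_inv, aMat_mul]
  congr 1
  ring

lemma commutatorElement_diagMat_inv_bMat_inv (s : Kˣ) (t : K) :
    (⁅(diagMat s)⁻¹, (bMat t)⁻¹⁆ : SL2 K) = bMat (t * (1 - (s : K) ^ 2)) := by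
  rw [commutatorElement_def, inv_inv, inv_inv, bMat_inv, mul_assoc (diagMat s)⁻¹, ← mul_assoc,
    diagMat_inv_mul_bMat_mul, bMat_mul]
  congr 1
  ring

variable [CharP K 2]

lemma aMat_one_mul_bMat_one_mul_aMat_one : aMat 1 * bMat 1 * aMat 1 = wMat K := by
  apply Subtype.ext
  simp only [Matrix.SpecialLinearGroup.coe_mul]
  simp [aMat, bMat, wMat, one_add_one_eq_two, CharTwo.two_eq_zero]

lemma diagMat_eq_aMat_mul_bMat_mul_aMat_mul_wMat (s : Kˣ) :
    diagMat s = aMat (s : K) * bMat ((s⁻¹ : Kˣ) : K) * aMat (s : K) * wMat K := by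
  apply Subtype.ext
  simp only [Matrix.SpecialLinearGroup.coe_mul]
  simp [aMat, bMat, wMat, diagMat, one_add_one_eq_two, CharTwo.two_eq_zero]

end Matrices

section Commutators

open scoped commutatorElement

variable {L : AddSubgroup K}

lemma aMat_mem_SL2L {t : K} (ht : t ∈ L) : aMat t ∈ SL2L L :=
  Subgroup.subset_closure (Or.inl ⟨t, ht, rfl⟩)

lemma bMat_mem_SL2L {t : K} (ht : t ∈ L) : bMat t ∈ SL2L L :=
  Subgroup.subset_closure (Or.inr ⟨t, ht, rfl⟩)

lemma wMat_mem_SL2L [CharP K 2] (h1 : (1 : K) ∈ L) : wMat K ∈ SL2L L := by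
  rw [← aMat_one_mul_bMat_one_mul_aMat_one]
  exact mul_mem (mul_mem (aMat_mem_SL2L h1) (bMat_mem_SL2L h1)) (aMat_mem_SL2L h1)

lemma diagMat_mem_SL2L [CharP K 2] {s : Kˣ} (hs : (s : K) ∈ L) (hs' : ((s⁻¹ : Kˣ) : K) ∈ L)
    (h1 : (1 : K) ∈ L) : diagMat s ∈ SL2L L := by
  rw [diagMat_eq_aMat_mul_bMat_mul_aMat_mul_wMat]
  exact mul_mem (mul_mem (mul_mem (aMat_mem_SL2L hs) (bMat_mem_SL2L hs')) (aMat_mem_SL2L hs))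
    (wMat_mem_SL2L h1)

lemma aMat_mul_one_sub_sq_mem_commutator {s : Kˣ} (hs : diagMat s ∈ SL2L L) {u : K}
    (hu : u ∈ L) : aMat (u * (1 - (s : K) ^ 2)) ∈ ⁅SL2L L, SL2L L⁆ :=
  commutatorElement_diagMat_aMat_inv s u ▸
    Subgroup.commutator_mem_commutator hs (inv_mem (aMat_mem_SL2L hu))

lemma bMat_mul_one_sub_sq_mem_commutator {s : Kˣ} (hs : diagMat s ∈ SL2L L) {u : K}
    (hu : u ∈ L) : bMat (u * (1 - (s : K) ^ 2)) ∈ ⁅SL2L L, SL2L L⁆ :=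
  commutatorElement_diagMat_inv_bMat_inv s u ▸
    Subgroup.commutator_mem_commutator (inv_mem hs) (inv_mem (bMat_mem_SL2L hu))

lemma SL2L_le_commutator {s : Kˣ} (hs : diagMat s ∈ SL2L L)
    (hdiv : ∀ t ∈ L, ∃ u ∈ L, u * (1 - (s : K) ^ 2) = t) : SL2L L ≤ ⁅SL2L L, SL2L L⁆ := by
  rw [SL2L, Subgroup.closure_le]
  rintro _ (⟨t, ht, rfl⟩ | ⟨t, ht, rfl⟩) <;> obtain ⟨u, hu, rfl⟩ := hdiv t ht
  exacts [aMat_mul_one_sub_sq_mem_commutator hs hu, bMat_mul_one_sub_sq_mem_commutator hs hu]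

end Commutators

/-- Timmesfeld's group `SL₂(L)` is perfect: it equals its own commutator subgroup.
In fact `A ⊆ [SL₂(L), SL₂(L)]`, via the identity
`[diag(s)⁻¹, a(t)] = diag(s)·a(t)⁻¹·diag(s)⁻¹·a(t) = a(t(1 - s²))`
(commutator convention `[g,h] = g⁻¹h⁻¹gh`). -/
theorem SL2L_perfect
    [CharP K 2] (himperf : ¬ Function.Surjective fun x : K => x ^ 2)
    (L : AddSubgroup K) (hsq : ∀ x : K, x ^ 2 ∈ L)
    (hvs : ∀ s t : K, t ∈ L → s ^ 2 * t ∈ L) :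
    ⁅SL2L L, SL2L L⁆ = SL2L L ∧
      setA L ⊆ (⁅SL2L L, SL2L L⁆ : Subgroup (SL2 K)) ∧
      ∀ s : Kˣ, s ∈ Tgen L → ∀ t ∈ L,
        diagMat s * (aMat t)⁻¹ * (diagMat s)⁻¹ * aMat t = aMat (t * (1 - (s : K) ^ 2)) := by
  obtain ⟨c, hc⟩ : ∃ c : K, ∀ x, x ^ 2 ≠ c := by simpa [Function.Surjective] using himperf
  have hc0 : c ≠ 0 := fun h => hc 0 (by simp [h])
  have hc1 : 1 - c ≠ 0 := sub_ne_zero.2 fun h => hc 1 (by simp [← h])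
  set s : Kˣ := Units.mk0 c hc0 ^ 2
  have hs : diagMat s ∈ SL2L L :=
    diagMat_mem_SL2L (by simpa [s] using hsq c) (by simpa [s] using hsq c⁻¹)
      (by simpa using hsq 1)
  have hdiv : ∀ t ∈ L, ∃ u ∈ L, u * (1 - (s : K) ^ 2) = t := by
    intro t ht
    refine ⟨((1 - c)⁻¹ ^ 2) ^ 2 * t, hvs _ t ht, ?_⟩
    have hfourth : 1 - (s : K) ^ 2 = ((1 - c) ^ 2) ^ 2 := by
      simp only [s, Units.val_pow_eq_pow_val, Units.val_mk0, sub_pow_expChar, one_pow]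
    rw [hfourth]
    field_simp
  have hle := SL2L_le_commutator hs hdiv
  refine ⟨le_antisymm ((Subgroup.commutator_le_sup _ _).trans_eq (sup_idem _)) hle,
    fun g hg => hle (Subgroup.subset_closure (Or.inl hg)), fun s _ t _ => ?_⟩
  simpa only [commutatorElement_def, inv_inv] using commutatorElement_diagMat_aMat_inv s t

end
end

section
/- Each nontrivial element of Aᵒᵖ lies in A·T(L)·w·A: for every nonzero s ∈ L one has s⁻¹ ∈ L and the matrix identity b(s) = a(s⁻¹)·diag(s⁻¹)·w·a(s⁻¹) in SL₂(K). Consequently Aᵒᵖ ⊆ A·T(L)·w·A ∪ {1}. -/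
open Matrix Pointwise

noncomputable section

variable {K : Type*} [Field K]

/-! `s⁻¹ = (s⁻¹)² · s` lies in `L` because `L` is a `K²`-subspace. The matrix identity is a
direct computation: the product `a(s⁻¹)·diag(s⁻¹)·w·a(s⁻¹)` is `[[1, 2s⁻¹], [s, 1]]`, and
`2 = 0` in `K`. -/

theorem inv_mem_of_sq_mul_mem {L : AddSubgroup K} (hvs : ∀ s t : K, t ∈ L → s ^ 2 * t ∈ L)
    {s : K} (hs : s ∈ L) : s⁻¹ ∈ L := by
  have hinv : s⁻¹ ^ 2 * s = s⁻¹ := by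
    rw [sq, mul_right_comm]
    simpa using mul_inv_mul_cancel s⁻¹
  exact hinv ▸ hvs s⁻¹ s hs

theorem bMat_zero : bMat (0 : K) = 1 := by
  ext i j
  fin_cases i <;> fin_cases j <;> simp [bMat]

theorem bMat_eq_aMat_mul_diagMat_mul_wMat_mul_aMat [CharP K 2] {s : K} (hs : s ≠ 0) :
    bMat s = aMat s⁻¹ * diagMat (Units.mk0 s hs)⁻¹ * wMat K * aMat s⁻¹ := by
  ext i j
  simp only [Matrix.SpecialLinearGroup.coe_mul]
  fin_cases i <;> fin_cases j <;>
    simp [aMat, bMat, diagMat, wMat, Matrix.mul_apply, Fin.sum_univ_two, hs,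
      CharTwo.add_self_eq_zero]

theorem diagMat_mem_setTL {L : AddSubgroup K} {u : Kˣ} (hu : (u : K) ∈ L) :
    diagMat u ∈ setTL L :=
  ⟨u, Subgroup.subset_closure hu, rfl⟩

theorem aMat_mem_setA {L : AddSubgroup K} {t : K} (ht : t ∈ L) : aMat t ∈ setA L :=
  ⟨t, ht, rfl⟩

theorem bop_in_ATwA_general
    [CharP K 2]
    (L : AddSubgroup K)
    (hvs : ∀ s t : K, t ∈ L → s ^ 2 * t ∈ L) :
    (∀ (s : K) (hs : s ≠ 0), s ∈ L →
        s⁻¹ ∈ L ∧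
          bMat s = aMat s⁻¹ * diagMat (Units.mk0 s hs)⁻¹ * wMat K * aMat s⁻¹) ∧
      setAop L ⊆ setA L * setTL L * {wMat K} * setA L ∪ {1} := by
  refine ⟨fun s hs hsL ↦ ⟨inv_mem_of_sq_mul_mem hvs hsL,
    bMat_eq_aMat_mul_diagMat_mul_wMat_mul_aMat hs⟩, ?_⟩
  rintro _ ⟨s, hsL, rfl⟩
  rcases eq_or_ne s 0 with rfl | hs
  · exact Or.inr bMat_zero
  · have hinv := inv_mem_of_sq_mul_mem hvs hsL
    rw [bMat_eq_aMat_mul_diagMat_mul_wMat_mul_aMat hs]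
    refine Or.inl (Set.mul_mem_mul (Set.mul_mem_mul (Set.mul_mem_mul
      (aMat_mem_setA hinv) ?_) rfl) (aMat_mem_setA hinv))
    exact diagMat_mem_setTL (by simpa using hinv)

/-- Each nontrivial element of `Aᵒᵖ` lies in `A·T(L)·w·A`: for nonzero `s ∈ L` one has
`s⁻¹ ∈ L` and `b(s) = a(s⁻¹)·diag(s⁻¹)·w·a(s⁻¹)`; consequently
`Aᵒᵖ ⊆ A·T(L)·w·A ∪ {1}`. -/
theorem bop_in_ATwA
    [CharP K 2] (himperf : ¬ Function.Surjective fun x : K => x ^ 2)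
    (L : AddSubgroup K) (hsq : ∀ x : K, x ^ 2 ∈ L)
    (hvs : ∀ s t : K, t ∈ L → s ^ 2 * t ∈ L) :
    (∀ (s : K) (hs : s ≠ 0), s ∈ L →
        s⁻¹ ∈ L ∧
          bMat s = aMat s⁻¹ * diagMat (Units.mk0 s hs)⁻¹ * wMat K * aMat s⁻¹) ∧
      setAop L ⊆ setA L * setTL L * {wMat K} * setA L ∪ {1} :=
  bop_in_ATwA_general L hvs

end
end
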